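/- arXiv:1403.0538 — 4 statements merged into one kernel-verified Lean document; each statement's English description precedes it below -/
import Mathlib

section
/- For all x̂, ξ̂ ∈ ℝ, the identity ((x̂+ξ̂)² + (√(x̂²+1)+√(ξ̂²+1))²) · ((x̂+ξ̂)² + (√(x̂²+1)−√(ξ̂²+1))²) = ((x̂−ξ̂)² + (√(x̂²+1)−√(ξ̂²+1))²) · ((x̂−ξ̂)² + (√(x̂²+1)+√(ξ̂²+1))²) · ((x̂+ξ̂)²/(x̂−ξ̂)²) holds whenever x̂ ≠ ξ̂; equivalently the ratio (((x̂+ξ̂)²+(√(x̂²+1)+√(ξ̂²+1))²)/((x̂−ξ̂)²+(√(x̂²+1)−√(ξ̂²+1))²)) · (((x̂+ξ̂)²+(√(x̂²+1)−√(ξ̂²+1))²)/((x̂−ξ̂)²+(√(x̂²+1)+√(ξ̂²+1))²)) equals (x̂+ξ̂)²/(x̂−ξ̂)². -/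
/-- The miraculous cancellation: the K₂ ratio for the hyperbola equals (x̂+ξ̂)²/(x̂−ξ̂)². -/
theorem stmt2 (x ξ : ℝ) (hne : x ≠ ξ) (hsum : x + ξ ≠ 0) :
    (((x + ξ)^2 + (Real.sqrt (x^2 + 1) + Real.sqrt (ξ^2 + 1))^2) /
        ((x - ξ)^2 + (Real.sqrt (x^2 + 1) - Real.sqrt (ξ^2 + 1))^2)) *
      (((x + ξ)^2 + (Real.sqrt (x^2 + 1) - Real.sqrt (ξ^2 + 1))^2) /
        ((x - ξ)^2 + (Real.sqrt (x^2 + 1) + Real.sqrt (ξ^2 + 1))^2))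
      = (x + ξ)^2 / (x - ξ)^2 := by
  set a := Real.sqrt (x^2 + 1) with hadef
  set b := Real.sqrt (ξ^2 + 1) with hbdef
  have ha : a^2 = x^2 + 1 := Real.sq_sqrt (by positivity)
  have hb : b^2 = ξ^2 + 1 := Real.sq_sqrt (by positivity)
  have hxs : (x - ξ) ≠ 0 := sub_ne_zero.mpr hne
  have hd1 : (x - ξ)^2 + (a - b)^2 ≠ 0 := by positivity
  have hd2 : (x - ξ)^2 + (a + b)^2 ≠ 0 := by positivity
  have hd3 : (x - ξ)^2 ≠ 0 := pow_ne_zero 2 hxs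
  field_simp
  linear_combination (-4*x*ξ*(x^2-ξ^2+a^2-b^2)) * ha - (-4*x*ξ*(x^2-ξ^2+a^2-b^2)) * hb
end

section
/- Let H : (0,∞) → ℝ be increasing and differentiable, y : [0,1] → ℝ, and define K₂(x,ξ,y) = H((y(x)+y(ξ))²+(x+ξ)²) − H((y(x)−y(ξ))²+(x−ξ)²) − H((y(x)+y(ξ))²+(x−ξ)²) + H((y(x)−y(ξ))²+(x+ξ)²). Then there exist α₁, α₂ > (x−ξ)² such that K₂(x,ξ,y) = 4 x ξ (H'(α₁) + H'(α₂)), provided x ξ ≠ 0. -/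
lemma mvt_aux (H H' : ℝ → ℝ)
    (hH : ∀ t ∈ Set.Ioi (0:ℝ), HasDerivAt H (H' t) t)
    {p q : ℝ} (hp : 0 < p) (hpq : p < q) :
    ∃ α ∈ Set.Ioo p q, H q - H p = (q - p) * H' α := by
  have hsub : Set.Icc p q ⊆ Set.Ioi (0:ℝ) := fun t ht => lt_of_lt_of_le hp ht.1
  have hcont : ContinuousOn H (Set.Icc p q) := fun t ht =>
    ((hH t (hsub ht)).continuousAt).continuousWithinAt
  have hderiv : ∀ t ∈ Set.Ioo p q, HasDerivAt H (H' t) t := fun t ht =>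
    hH t (hsub (Set.Ioo_subset_Icc_self ht))
  obtain ⟨α, hα, hslope⟩ := exists_hasDerivAt_eq_slope H H' hpq hcont hderiv
  have hne : q - p ≠ 0 := by linarith
  refine ⟨α, hα, ?_⟩
  rw [hslope]
  field_simp

/-- Mean value representation of the kernel K₂: there are α₁, α₂ > (x−ξ)² with
K₂(x,ξ,y) = 4 x ξ (H'(α₁) + H'(α₂)). -/
theorem stmt6 (H H' y : ℝ → ℝ)
    (hmono : MonotoneOn H (Set.Ioi (0:ℝ)))
    (hH : ∀ t ∈ Set.Ioi (0:ℝ), HasDerivAt H (H' t) t)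
    (x ξ : ℝ) (hx : x ∈ Set.Ioc (0:ℝ) 1) (hξ : ξ ∈ Set.Ioc (0:ℝ) 1)
    (hxξ : x * ξ ≠ 0)
    (h1 : 0 < (y x - y ξ)^2 + (x + ξ)^2) (h2 : 0 < (y x - y ξ)^2 + (x - ξ)^2)
    (h3 : 0 < (y x + y ξ)^2 + (x + ξ)^2) (h4 : 0 < (y x + y ξ)^2 + (x - ξ)^2) :
    ∃ α₁ α₂ : ℝ, α₁ > (x - ξ)^2 ∧ α₂ > (x - ξ)^2 ∧
      H ((y x + y ξ)^2 + (x + ξ)^2) - H ((y x - y ξ)^2 + (x - ξ)^2)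
        - H ((y x + y ξ)^2 + (x - ξ)^2) + H ((y x - y ξ)^2 + (x + ξ)^2)
      = 4 * x * ξ * (H' α₁ + H' α₂) := by
  have hx0 : 0 < x := hx.1
  have hξ0 : 0 < ξ := hξ.1
  have hcd : (x - ξ)^2 < (x + ξ)^2 := by nlinarith
  have hlt1 : (y x + y ξ)^2 + (x - ξ)^2 < (y x + y ξ)^2 + (x + ξ)^2 := by linarith
  have hlt2 : (y x - y ξ)^2 + (x - ξ)^2 < (y x - y ξ)^2 + (x + ξ)^2 := by linarith
  obtain ⟨α₁, hα₁, heq₁⟩ := mvt_aux H H' hH h4 hlt1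
  obtain ⟨α₂, hα₂, heq₂⟩ := mvt_aux H H' hH h2 hlt2
  have hd2 : (x - ξ)^2 ≤ (y x + y ξ)^2 + (x - ξ)^2 := by nlinarith [sq_nonneg (y x + y ξ)]
  have hd3 : (x - ξ)^2 ≤ (y x - y ξ)^2 + (x - ξ)^2 := by nlinarith [sq_nonneg (y x - y ξ)]
  refine ⟨α₁, α₂, lt_of_le_of_lt hd2 hα₁.1, lt_of_le_of_lt hd3 hα₂.1, ?_⟩
  have hdiff : (y x + y ξ)^2 + (x + ξ)^2 - ((y x + y ξ)^2 + (x - ξ)^2) = 4 * x * ξ := by ring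
  nlinarith [heq₁, heq₂]
end

section
/- The kernel (x,ξ) ↦ xξ/(x²+ξ²) on (0,1)×(0,1) is positive semidefinite, and consequently so is (x,ξ) ↦ xξ/((x²+ξ²)(x+ξ)): for all u ∈ L²(0,1), ∫₀¹∫₀¹ u(x)u(ξ)·xξ/((x²+ξ²)(x+ξ)) dx dξ ≥ 0. -/
/-!
Both kernels are superpositions of rank-one kernels `g_p ⊗ g_p` with `g_p ≥ 0`:
`xξ / (x² + ξ²) = ∫₀^∞ (x e^{-tx²}) (ξ e^{-tξ²}) dt`, and multiplying by
`1 / (x + ξ) = ∫₀^∞ e^{-sx} e^{-sξ} ds` gives again such a superposition, over the pairs `(t, s)`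
(Schur's product theorem). For such a kernel Fubini turns the quadratic form into
`∫ (∫ u g_p)² dν(p) ≥ 0`. Fubini applies because on `(0, 1)²` both kernels are at most
`1 / (x + ξ)`, and by Hilbert's inequality `∫∫ |u(x)| |u(ξ)| / (x + ξ) ≤ π ‖u‖₂²`.
-/

open MeasureTheory Set Real Filter
open scoped ENNReal Topology

section GramKernel

variable {ι κ α : Type*} [MeasurableSpace ι] [MeasurableSpace κ]

/-- The Gram kernel of the feature map `x ↦ (p ↦ g p x)` into `L²(ν)`. -/
noncomputable def gramKernel (ν : Measure ι) (g : ι → α → ℝ) (x ξ : α) : ℝ≥0∞ :=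
  ∫⁻ p, ENNReal.ofReal (g p x * g p ξ) ∂ν

theorem gramKernel_prod (ν₁ : Measure ι) (ν₂ : Measure κ) [SFinite ν₂] {g₁ : ι → α → ℝ}
    {g₂ : κ → α → ℝ} (hg₁ : ∀ x, Measurable fun p ↦ g₁ p x) (hg₂ : ∀ x, Measurable fun q ↦ g₂ q x)
    (hg₁_nonneg : ∀ p x, 0 ≤ g₁ p x) (x ξ : α) :
    gramKernel (ν₁.prod ν₂) (fun q x ↦ g₁ q.1 x * g₂ q.2 x) x ξ =
      gramKernel ν₁ g₁ x ξ * gramKernel ν₂ g₂ x ξ := by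
  have hsplit : ∀ q : ι × κ, ENNReal.ofReal (g₁ q.1 x * g₂ q.2 x * (g₁ q.1 ξ * g₂ q.2 ξ)) =
      ENNReal.ofReal (g₁ q.1 x * g₁ q.1 ξ) * ENNReal.ofReal (g₂ q.2 x * g₂ q.2 ξ) := fun q ↦ by
    rw [← ENNReal.ofReal_mul (mul_nonneg (hg₁_nonneg _ _) (hg₁_nonneg _ _))]
    ring_nf
  simp only [gramKernel, hsplit]
  exact lintegral_prod_mul ((hg₁ x).mul (hg₁ ξ)).ennreal_ofReal.aemeasurable
    ((hg₂ x).mul (hg₂ ξ)).ennreal_ofReal.aemeasurable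

theorem integral_mul_eq_toReal_gramKernel {ν : Measure ι} {g : ι → α → ℝ}
    (hg : ∀ x, Measurable fun p ↦ g p x) (hg_nonneg : ∀ p x, 0 ≤ g p x) (x ξ : α) :
    ∫ p, g p x * g p ξ ∂ν = (gramKernel ν g x ξ).toReal :=
  integral_eq_lintegral_of_nonneg_ae
    (ae_of_all _ fun p ↦ mul_nonneg (hg_nonneg p x) (hg_nonneg p ξ))
    ((hg x).mul (hg ξ)).aestronglyMeasurable

theorem integral_integral_mul_nonneg_of_gramKernel [MeasurableSpace α] {μ : Measure α}
    {ν : Measure ι} [SFinite μ] [SFinite ν] {g : ι → α → ℝ} (hg : Measurable (Function.uncurry g))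
    (hg_nonneg : ∀ p x, 0 ≤ g p x) {K : α → α → ℝ}
    (hK : ∀ᵐ z ∂μ.prod μ, gramKernel ν g z.1 z.2 = ENNReal.ofReal (K z.1 z.2))
    (hK_nonneg : ∀ᵐ z ∂μ.prod μ, 0 ≤ K z.1 z.2) {v : α → ℝ} (hv : AEStronglyMeasurable v μ)
    (hvK : Integrable (fun z ↦ v z.1 * v z.2 * K z.1 z.2) (μ.prod μ)) :
    0 ≤ ∫ x, ∫ ξ, v x * v ξ * K x ξ ∂μ ∂μ := by
  have hg' : ∀ x, Measurable fun p ↦ g p x := fun _ ↦ hg.of_uncurry_right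
  set F : ι × α × α → ℝ := fun q ↦ (v q.2.1 * g q.1 q.2.1) * (v q.2.2 * g q.1 q.2.2)
  have hF_meas : AEStronglyMeasurable F (ν.prod (μ.prod μ)) := by
    have h₁ : Measurable fun q : ι × α × α ↦ g q.1 q.2.1 :=
      hg.comp (measurable_fst.prodMk (measurable_fst.comp measurable_snd))
    have h₂ : Measurable fun q : ι × α × α ↦ g q.1 q.2.2 :=
      hg.comp (measurable_fst.prodMk (measurable_snd.comp measurable_snd))
    exact ((hv.comp_fst.comp_snd).mul h₁.aestronglyMeasurable).mul
      ((hv.comp_snd.comp_snd).mul h₂.aestronglyMeasurable)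
  have hF_eq : ∀ p z, F (p, z) = v z.1 * v z.2 * (g p z.1 * g p z.2) := fun p z ↦ by ring
  have hF_section : ∀ᵐ z ∂μ.prod μ, ∫ p, F (p, z) ∂ν = v z.1 * v z.2 * K z.1 z.2 := by
    filter_upwards [hK, hK_nonneg] with z hKz hKz_nonneg
    rw [integral_congr_ae (ae_of_all _ (hF_eq · z)), integral_const_mul,
      integral_mul_eq_toReal_gramKernel hg' hg_nonneg, hKz, ENNReal.toReal_ofReal hKz_nonneg]
  have hF_int : Integrable F (ν.prod (μ.prod μ)) := by
    refine ⟨hF_meas, ?_⟩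
    have hF_enorm : ∀ᵐ z ∂μ.prod μ, ∫⁻ p, ‖F (p, z)‖ₑ ∂ν = ‖v z.1 * v z.2 * K z.1 z.2‖ₑ := by
      filter_upwards [hK, hK_nonneg] with z hKz hKz_nonneg
      have hF : ∀ p, ‖F (p, z)‖ₑ = ‖v z.1 * v z.2‖ₑ * ENNReal.ofReal (g p z.1 * g p z.2) :=
        fun p ↦ by
          rw [← Real.enorm_of_nonneg (mul_nonneg (hg_nonneg p z.1) (hg_nonneg p z.2)),
            ← enorm_mul, hF_eq]
      rw [lintegral_congr hF, lintegral_const_mul' _ _ enorm_ne_top, ← gramKernel, hKz,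
        ← Real.enorm_of_nonneg hKz_nonneg, ← enorm_mul]
    rw [HasFiniteIntegral, lintegral_prod_symm _ hF_meas.enorm, lintegral_congr_ae hF_enorm]
    exact hvK.2
  calc (0 : ℝ) ≤ ∫ p, (∫ x, v x * g p x ∂μ) * (∫ x, v x * g p x ∂μ) ∂ν :=
        integral_nonneg fun p ↦ mul_self_nonneg _
    _ = ∫ q, F q ∂ν.prod (μ.prod μ) := by
        rw [integral_prod _ hF_int]
        exact integral_congr_ae (ae_of_all _ fun p ↦ (integral_prod_mul _ _).symm)
    _ = ∫ z, v z.1 * v z.2 * K z.1 z.2 ∂μ.prod μ := by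
        rw [integral_prod_symm _ hF_int]
        exact integral_congr_ae hF_section
    _ = ∫ x, ∫ ξ, v x * v ξ * K x ξ ∂μ ∂μ := integral_prod _ hvK

end GramKernel

theorem lintegral_exp_neg_mul_Ioi {b : ℝ} (hb : 0 < b) :
    ∫⁻ t in Ioi 0, ENNReal.ofReal (exp (-b * t)) = ENNReal.ofReal b⁻¹ := by
  rw [← ofReal_integral_eq_lintegral_ofReal (exp_neg_integrableOn_Ioi 0 hb)
    (ae_of_all _ fun _ ↦ (exp_pos _).le), integral_exp_mul_Ioi (neg_neg_of_pos hb)]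
  simp

theorem gramKernel_exp_neg {x ξ : ℝ} (h : 0 < x + ξ) :
    gramKernel (volume.restrict (Ioi 0)) (fun t x ↦ exp (-x * t)) x ξ =
      ENNReal.ofReal (x + ξ)⁻¹ := by
  simp only [gramKernel, ← exp_add, ← add_mul, ← neg_add]
  exact lintegral_exp_neg_mul_Ioi h

theorem gramKernel_gaussian {x ξ : ℝ} (hx : 0 < x) (hξ : 0 < ξ) :
    gramKernel (volume.restrict (Ioi 0)) (fun t x ↦ |x| * exp (-x ^ 2 * t)) x ξ =
      ENNReal.ofReal (x * ξ / (x ^ 2 + ξ ^ 2)) := by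
  have hsplit : ∀ t, ENNReal.ofReal (|x| * exp (-x ^ 2 * t) * (|ξ| * exp (-ξ ^ 2 * t))) =
      ENNReal.ofReal (x * ξ) * ENNReal.ofReal (exp (-x ^ 2 * t) * exp (-ξ ^ 2 * t)) := fun t ↦ by
    rw [← ENNReal.ofReal_mul (by positivity), abs_of_pos hx, abs_of_pos hξ]
    ring_nf
  have hexp := gramKernel_exp_neg (x := x ^ 2) (ξ := ξ ^ 2) (by positivity)
  simp only [gramKernel, hsplit] at hexp ⊢
  rw [lintegral_const_mul' _ _ ENNReal.ofReal_ne_top, hexp, ← ENNReal.ofReal_mul (by positivity),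
    div_eq_mul_inv]

theorem gramKernel_gaussian_mul_exp_neg {x ξ : ℝ} (hx : 0 < x) (hξ : 0 < ξ) :
    gramKernel ((volume.restrict (Ioi 0)).prod (volume.restrict (Ioi 0)))
        (fun q x ↦ |x| * exp (-x ^ 2 * q.1) * exp (-x * q.2)) x ξ =
      ENNReal.ofReal (x * ξ / ((x ^ 2 + ξ ^ 2) * (x + ξ))) := by
  rw [gramKernel_prod (g₁ := fun t x ↦ |x| * exp (-x ^ 2 * t)) (g₂ := fun t x ↦ exp (-x * t))
      _ _ (fun _ ↦ by fun_prop) (fun _ ↦ by fun_prop) (fun _ _ ↦ by positivity),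
    gramKernel_gaussian hx hξ, gramKernel_exp_neg (by positivity),
    ← ENNReal.ofReal_mul (by positivity), ← div_eq_mul_inv, div_div]

theorem lintegral_sqrt_div_sqrt_div_add_Ioi {x : ℝ} (hx : 0 < x) :
    ∫⁻ ξ in Ioi 0, ENNReal.ofReal (√x / √ξ / (x + ξ)) = ENNReal.ofReal π := by
  set G : ℝ → ℝ := fun ξ ↦ 2 * arctan (√ξ / √x)
  have hsx : 0 < √x := sqrt_pos.2 hx
  have hG : ∀ ξ ∈ Ioi (0 : ℝ), HasDerivAt G (√x / √ξ / (x + ξ)) ξ := fun ξ (hξ : 0 < ξ) ↦ by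
    refine ((((hasDerivAt_sqrt hξ.ne').div_const √x).arctan).const_mul 2).congr_deriv ?_
    rw [div_pow, sq_sqrt hx.le, sq_sqrt hξ.le]
    field_simp
    rw [sq_sqrt hx.le]
  have hG_cont : ContinuousWithinAt G (Ici 0) 0 := by
    apply Continuous.continuousWithinAt
    fun_prop
  have hG_nonneg : ∀ ξ ∈ Ioi (0 : ℝ), 0 ≤ √x / √ξ / (x + ξ) := fun ξ (hξ : 0 < ξ) ↦ by positivity
  have hG_lim : Tendsto G atTop (𝓝 π) := by
    have := ((tendsto_arctan_atTop.mono_right nhdsWithin_le_nhds).comp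
      (tendsto_sqrt_atTop.atTop_div_const hsx)).const_mul 2
    rwa [mul_div_cancel₀ _ two_ne_zero] at this
  rw [← ofReal_integral_eq_lintegral_ofReal
      (integrableOn_Ioi_deriv_of_nonneg hG_cont hG hG_nonneg hG_lim)
      ((ae_restrict_iff' measurableSet_Ioi).2 (ae_of_all _ hG_nonneg)),
    integral_Ioi_of_hasDerivAt_of_nonneg hG_cont hG hG_nonneg hG_lim]
  simp [G]

theorem abs_mul_div_add_le {x ξ : ℝ} (hx : 0 < x) (hξ : 0 < ξ) (a b : ℝ) :
    |a * b / (x + ξ)| ≤ a ^ 2 / 2 * (√x / √ξ / (x + ξ)) + b ^ 2 / 2 * (√ξ / √x / (ξ + x)) := by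
  have hp := sqrt_pos.2 hx
  have hq := sqrt_pos.2 hξ
  rw [abs_div, abs_mul, abs_of_pos (add_pos hx hξ), add_comm ξ x, div_le_iff₀ (add_pos hx hξ)]
  field_simp
  nlinarith [sq_nonneg (|a| * √x - |b| * √ξ), sq_abs a, sq_abs b, sq_sqrt hx.le, sq_sqrt hξ.le]

/-- Hilbert's inequality, proved by the Schur test with weight `√x / √ξ`. -/
theorem lintegral_enorm_mul_div_add_le {s : Set ℝ} (hs : MeasurableSet s) (hs_pos : s ⊆ Ioi 0)
    {f : ℝ → ℝ} (hf : AEMeasurable f (volume.restrict s)) :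
    ∫⁻ z, ‖f z.1 * f z.2 / (z.1 + z.2)‖ₑ ∂(volume.restrict s).prod (volume.restrict s) ≤
      ENNReal.ofReal π * ∫⁻ x in s, ENNReal.ofReal (f x ^ 2) := by
  set μ := volume.restrict s
  set W : ℝ × ℝ → ℝ≥0∞ := fun z ↦ ENNReal.ofReal (f z.1 ^ 2 / 2 * (√z.1 / √z.2 / (z.1 + z.2)))
  have hmem : ∀ᵐ z ∂μ.prod μ, 0 < z.1 ∧ 0 < z.2 := by
    rw [Measure.prod_restrict]
    filter_upwards [ae_restrict_mem (hs.prod hs)] with z hz using ⟨hs_pos hz.1, hs_pos hz.2⟩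
  have hW_meas : AEMeasurable W (μ.prod μ) := by
    have := hf.comp_fst (ν := μ)
    fun_prop
  have hW_le :
      ∫⁻ z, W z ∂μ.prod μ ≤ ENNReal.ofReal π * ∫⁻ x in s, ENNReal.ofReal (f x ^ 2 / 2) := by
    rw [lintegral_prod _ hW_meas, ← lintegral_const_mul' _ _ ENNReal.ofReal_ne_top]
    refine lintegral_mono_ae ?_
    filter_upwards [ae_restrict_mem hs] with x hx
    have hx0 : 0 < x := hs_pos hx
    simp only [W]
    simp_rw [ENNReal.ofReal_mul (by positivity : 0 ≤ f x ^ 2 / 2)]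
    rw [lintegral_const_mul' _ _ ENNReal.ofReal_ne_top, mul_comm]
    gcongr
    calc ∫⁻ ξ in s, ENNReal.ofReal (√x / √ξ / (x + ξ))
        ≤ ∫⁻ ξ in Ioi 0, ENNReal.ofReal (√x / √ξ / (x + ξ)) := lintegral_mono_set hs_pos
      _ = ENNReal.ofReal π := lintegral_sqrt_div_sqrt_div_add_Ioi hx0
  calc ∫⁻ z, ‖f z.1 * f z.2 / (z.1 + z.2)‖ₑ ∂μ.prod μ
      ≤ ∫⁻ z, W z + W z.swap ∂μ.prod μ := by
        refine lintegral_mono_ae ?_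
        filter_upwards [hmem] with z hz
        rw [Real.enorm_eq_ofReal_abs]
        exact (ENNReal.ofReal_le_ofReal (abs_mul_div_add_le hz.1 hz.2 _ _)).trans
          ENNReal.ofReal_add_le
    _ = 2 * ∫⁻ z, W z ∂μ.prod μ := by
        rw [lintegral_add_left' hW_meas, lintegral_prod_swap W, two_mul]
    _ ≤ 2 * (ENNReal.ofReal π * ∫⁻ x in s, ENNReal.ofReal (f x ^ 2 / 2)) := by gcongr
    _ = ENNReal.ofReal π * ∫⁻ x in s, ENNReal.ofReal (f x ^ 2) := by
        simp_rw [ENNReal.ofReal_div_of_pos two_pos, ENNReal.ofReal_ofNat, div_eq_mul_inv]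
        rw [lintegral_mul_const' _ _ (ENNReal.inv_ne_top.2 two_ne_zero), mul_left_comm,
          mul_left_comm 2, ENNReal.mul_inv_cancel two_ne_zero ENNReal.ofNat_ne_top, mul_one]

theorem integrable_mul_mul_div_add {s : Set ℝ} (hs : MeasurableSet s) (hs_pos : s ⊆ Ioi 0)
    {f : ℝ → ℝ} (hf : MemLp f 2 (volume.restrict s)) :
    Integrable (fun z : ℝ × ℝ ↦ f z.1 * f z.2 / (z.1 + z.2))
      ((volume.restrict s).prod (volume.restrict s)) := by
  have hinv : Measurable fun z : ℝ × ℝ ↦ (z.1 + z.2)⁻¹ := by fun_prop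
  refine ⟨(hf.1.comp_fst.mul hf.1.comp_snd).mul hinv.aestronglyMeasurable, ?_⟩
  exact (lintegral_enorm_mul_div_add_le hs hs_pos hf.1.aemeasurable).trans_lt
    (ENNReal.mul_lt_top ENNReal.ofReal_lt_top hf.integrable_sq.lintegral_lt_top)

theorem integral_integral_mul_nonneg_of_gramKernel_le_inv_add {s : Set ℝ} (hs : MeasurableSet s)
    (hs_pos : s ⊆ Ioi 0) {ι : Type*} [MeasurableSpace ι] {ν : Measure ι} [SFinite ν]
    {g : ι → ℝ → ℝ} (hg : Measurable (Function.uncurry g)) (hg_nonneg : ∀ p x, 0 ≤ g p x)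
    {K : ℝ → ℝ → ℝ} (hK_meas : Measurable (Function.uncurry K))
    (hK : ∀ x ∈ s, ∀ ξ ∈ s, gramKernel ν g x ξ = ENNReal.ofReal (K x ξ))
    (hK_nonneg : ∀ x ∈ s, ∀ ξ ∈ s, 0 ≤ K x ξ) (hK_le : ∀ x ∈ s, ∀ ξ ∈ s, K x ξ ≤ (x + ξ)⁻¹)
    {f : ℝ → ℝ} (hf : MemLp f 2 (volume.restrict s)) :
    0 ≤ ∫ x in s, ∫ ξ in s, f x * f ξ * K x ξ := by
  have hmem : ∀ᵐ z ∂(volume.restrict s).prod (volume.restrict s), z.1 ∈ s ∧ z.2 ∈ s := by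
    rw [Measure.prod_restrict]
    exact ae_restrict_mem (hs.prod hs)
  refine integral_integral_mul_nonneg_of_gramKernel hg hg_nonneg
    (hmem.mono fun z hz ↦ hK _ hz.1 _ hz.2) (hmem.mono fun z hz ↦ hK_nonneg _ hz.1 _ hz.2) hf.1 ?_
  refine (integrable_mul_mul_div_add hs hs_pos hf).mono
    ((hf.1.comp_fst.mul hf.1.comp_snd).mul hK_meas.aestronglyMeasurable) ?_
  filter_upwards [hmem] with z ⟨hz₁, hz₂⟩
  have hpos : 0 < z.1 + z.2 := add_pos (hs_pos hz₁) (hs_pos hz₂)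
  rw [norm_mul, norm_div, Real.norm_of_nonneg (hK_nonneg _ hz₁ _ hz₂), Real.norm_of_nonneg hpos.le,
    div_eq_mul_inv]
  exact mul_le_mul_of_nonneg_left (hK_le _ hz₁ _ hz₂) (norm_nonneg _)

theorem mul_div_sq_add_sq_le_inv_add {x ξ : ℝ} (hx : x ∈ Ioo 0 1) (hξ : ξ ∈ Ioo 0 1) :
    x * ξ / (x ^ 2 + ξ ^ 2) ≤ (x + ξ)⁻¹ := by
  obtain ⟨hx₀, hx₁⟩ := hx
  obtain ⟨hξ₀, hξ₁⟩ := hξ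
  rw [div_le_iff₀ (by positivity), inv_mul_eq_div, le_div_iff₀ (by positivity)]
  nlinarith [sq_nonneg (x - ξ), mul_pos hx₀ hξ₀]

theorem mul_div_mul_add_le_inv_add {x ξ : ℝ} (hx : 0 < x) (hξ : 0 < ξ) :
    x * ξ / ((x ^ 2 + ξ ^ 2) * (x + ξ)) ≤ (x + ξ)⁻¹ := by
  rw [← div_div, div_eq_mul_inv _ (x + ξ)]
  refine mul_le_of_le_one_left (by positivity) ?_
  rw [div_le_one (by positivity)]
  nlinarith [sq_nonneg (x - ξ), mul_pos hx hξ]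

/-- The kernel xξ/(x²+ξ²) is positive semidefinite on L²(0,1), and consequently so is
xξ/((x²+ξ²)(x+ξ)). -/
theorem stmt15 (u : ℝ → ℝ)
    (hu : MeasureTheory.MemLp u 2 (MeasureTheory.volume.restrict (Set.Ioo (0:ℝ) 1))) :
    0 ≤ (∫ x in Set.Ioo (0:ℝ) 1, ∫ ξ in Set.Ioo (0:ℝ) 1,
        u x * u ξ * (x * ξ / (x^2 + ξ^2))) ∧
    0 ≤ (∫ x in Set.Ioo (0:ℝ) 1, ∫ ξ in Set.Ioo (0:ℝ) 1,
        u x * u ξ * (x * ξ / ((x^2 + ξ^2) * (x + ξ)))) := by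
  constructor
  · refine integral_integral_mul_nonneg_of_gramKernel_le_inv_add measurableSet_Ioo
      Ioo_subset_Ioi_self (g := fun t x ↦ |x| * exp (-x ^ 2 * t)) (by fun_prop)
      (fun _ _ ↦ by positivity) (by fun_prop) (fun x hx ξ hξ ↦ gramKernel_gaussian hx.1 hξ.1)
      (fun x ⟨hx, _⟩ ξ ⟨hξ, _⟩ ↦ by positivity)
      (fun x hx ξ hξ ↦ mul_div_sq_add_sq_le_inv_add hx hξ) hu
  · refine integral_integral_mul_nonneg_of_gramKernel_le_inv_add measurableSet_Ioo
      Ioo_subset_Ioi_self (g := fun (q : ℝ × ℝ) x ↦ |x| * exp (-x ^ 2 * q.1) * exp (-x * q.2))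
      (by fun_prop) (fun _ _ ↦ by positivity) (by fun_prop)
      (fun x hx ξ hξ ↦ gramKernel_gaussian_mul_exp_neg hx.1 hξ.1)
      (fun x ⟨hx, _⟩ ξ ⟨hξ, _⟩ ↦ by positivity)
      (fun x hx ξ hξ ↦ mul_div_mul_add_le_inv_add hx.1 hξ.1) hu
end

section
/- Suppose f ∈ C^∞([−1,1]), g ∈ C([−1,1]), and ε ∈ (0,1). Then the function Φ(x) = ∫_{−1}^1 g(ξ) log(1 + ((f(x)−f(ξ))/(x−ξ))²) dξ satisfies ‖Φ‖_{C¹[−1,1]} ≤ C ε⁻¹ ‖f‖_{C^{1+ε}[−1,1]} ‖g‖_{C[−1,1]} with C an absolute constant. -/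
open Set MeasureTheory intervalIntegral Filter

section Stmt18Aux

/-- A quadratic bound on the difference implies a derivative within a set. -/
lemma quad_hasDerivWithinAt {s : Set ℝ} {F : ℝ → ℝ} {x a C : ℝ}
    (h : ∀ y ∈ s, |F y - F x - (y - x) * a| ≤ C * (y - x) ^ 2) :
    HasDerivWithinAt F a s x := by
  rw [hasDerivWithinAt_iff_isLittleO, Asymptotics.isLittleO_iff]
  intro c hc
  have hC1 : (0 : ℝ) < max C 1 := lt_of_lt_of_le one_pos (le_max_right _ _)
  have h1 : ∀ᶠ y in nhdsWithin x s, y ∈ s := eventually_mem_nhdsWithin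
  have h2 : ∀ᶠ y in nhdsWithin x s, dist y x < c / max C 1 := by
    apply Filter.Eventually.filter_mono nhdsWithin_le_nhds
    exact Metric.eventually_nhds_iff.mpr ⟨c / max C 1, by positivity, fun y hy => hy⟩
  filter_upwards [h1, h2] with y hy hdist
  have hd : |y - x| < c / max C 1 := by rwa [Real.dist_eq] at hdist
  have h3 := h y hy
  rw [Real.norm_eq_abs, Real.norm_eq_abs, smul_eq_mul]
  have habs : (0:ℝ) ≤ |y - x| := abs_nonneg _
  have hsq : (y - x) ^ 2 = |y - x| * |y - x| := by
    rw [abs_mul_abs_self]; ring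
  have hCle : C ≤ max C 1 := le_max_left _ _
  have : C * (y - x) ^ 2 ≤ c * |y - x| := by
    rw [hsq]
    have h4 : |y - x| ≤ c / max C 1 := le_of_lt hd
    calc C * (|y - x| * |y - x|) ≤ max C 1 * (|y - x| * |y - x|) := by nlinarith
      _ ≤ max C 1 * ((c / max C 1) * |y - x|) := by
          have := mul_le_mul_of_nonneg_right h4 habs
          nlinarith
      _ = c * |y - x| := by field_simp
  linarith [h3]

lemma log_one_add_sq_le {t m : ℝ} (hm : 0 ≤ m) (h : |t| ≤ m) :
    Real.log (1 + t ^ 2) ≤ 2 * m := by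
  have h1 : 1 + t ^ 2 ≤ (1 + m) ^ 2 := by nlinarith [sq_abs t, abs_nonneg t]
  have h2 : Real.log (1 + t ^ 2) ≤ Real.log ((1 + m) ^ 2) :=
    Real.log_le_log (by positivity) h1
  have h3 : Real.log ((1 + m) ^ 2) = 2 * Real.log (1 + m) := by
    rw [Real.log_pow]; push_cast; ring
  have h4 : Real.log (1 + m) ≤ m := by
    have := Real.log_le_sub_one_of_pos (show (0:ℝ) < 1 + m by linarith)
    linarith
  linarith

lemma kernel_quot_abs_le (q r : ℝ) : |(1 + q ^ 2)⁻¹ * (2 * q * r)| ≤ |r| := by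
  rw [abs_mul, abs_inv, abs_of_pos (show (0:ℝ) < 1 + q ^ 2 by positivity)]
  rw [inv_mul_le_iff₀ (by positivity : (0:ℝ) < 1 + q ^ 2)]
  have h1 : |2 * q * r| = 2 * |q| * |r| := by
    rw [abs_mul, abs_mul]; simp [abs_of_nonneg]
  rw [h1]
  nlinarith [abs_nonneg q, abs_nonneg r, sq_abs q, sq_nonneg (|q| - 1)]

/-- Mean value inequality. -/
lemma mvt_lip {F F' : ℝ → ℝ} {s : Set ℝ} (hs : Convex ℝ s)
    (hd : ∀ w ∈ s, HasDerivWithinAt F (F' w) s w) {K : ℝ}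
    (hK : ∀ w ∈ s, |F' w| ≤ K) {a b : ℝ} (ha : a ∈ s) (hb : b ∈ s) :
    |F b - F a| ≤ K * |b - a| := by
  have := hs.norm_image_sub_le_of_norm_hasDerivWithin_le hd
    (fun w hw => by rw [Real.norm_eq_abs]; exact hK w hw) ha hb
  simpa [Real.norm_eq_abs] using this

/-- First-order Taylor bound from a bound on the derivative increment. -/
lemma mvt_taylor {F F' : ℝ → ℝ} {s : Set ℝ} (hs : Convex ℝ s)
    (hd : ∀ w ∈ s, HasDerivWithinAt F (F' w) s w) {a b K : ℝ}
    (ha : a ∈ s) (hb : b ∈ s) (hK : ∀ w ∈ s, |F' w - F' a| ≤ K) :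
    |F b - F a - (b - a) * F' a| ≤ K * |b - a| := by
  have hd' : ∀ w ∈ s, HasDerivWithinAt (fun w => F w - w * F' a) (F' w - F' a) s w :=
    fun w hw => (hd w hw).sub (by simpa using (hasDerivWithinAt_id w s).mul_const (F' a))
  have := hs.norm_image_sub_le_of_norm_hasDerivWithin_le hd'
    (fun w hw => by rw [Real.norm_eq_abs]; exact hK w hw) ha hb
  rw [Real.norm_eq_abs, Real.norm_eq_abs] at this
  have heq : F b - b * F' a - (F a - a * F' a) = F b - F a - (b - a) * F' a := by ring
  rwa [heq] at this

lemma abs_sub_le_uIcc {x y w : ℝ} (h : w ∈ uIcc x y) : |w - x| ≤ |y - x| := by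
  rcases le_total x y with h' | h'
  · rw [uIcc_of_le h'] at h
    rw [abs_of_nonneg (by linarith [h.1]), abs_of_nonneg (by linarith)]
    linarith [h.2]
  · rw [uIcc_of_ge h'] at h
    rw [abs_of_nonpos (by linarith [h.2]), abs_of_nonpos (by linarith)]
    linarith [h.1]

lemma abs_rpow_integrable {ε : ℝ} (hε0 : 0 < ε) (a b : ℝ) :
    IntervalIntegrable (fun u => |u| ^ (ε - 1)) volume a b := by
  suffices h : ∀ c : ℝ, IntervalIntegrable (fun u => |u| ^ (ε - 1)) volume 0 c by
    exact (h a).symm.trans (h b)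
  have hpos : ∀ c : ℝ, 0 ≤ c → IntervalIntegrable (fun u => |u| ^ (ε - 1)) volume 0 c := by
    intro c hc
    have base : IntervalIntegrable (fun u : ℝ => u ^ (ε - 1)) volume 0 c :=
      intervalIntegrable_rpow' (by linarith)
    rw [intervalIntegrable_iff, uIoc_of_le hc] at base ⊢
    apply base.congr_fun ?_ measurableSet_Ioc
    intro u hu
    dsimp only
    rw [abs_of_pos hu.1]
  intro c
  rcases le_total 0 c with hc | hc
  · exact hpos c hc
  · have h1 := hpos (-c) (by linarith)
    have h2 := (IntervalIntegrable.iff_comp_neg).mp h1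
    simp only [neg_zero, neg_neg, abs_neg] at h2
    exact h2

lemma rpow_integral_bound {x ε : ℝ} (hx : x ∈ Icc (-1:ℝ) 1) (hε : 0 < ε) (hε1 : ε ≤ 1) :
    IntervalIntegrable (fun ξ => |x - ξ| ^ (ε - 1)) volume (-1) 1 ∧
    (∫ ξ in (-1:ℝ)..1, |x - ξ| ^ (ε - 1)) ≤ 4 / ε := by
  have hint : IntervalIntegrable (fun ξ => |x - ξ| ^ (ε - 1)) volume (-1) 1 := by
    have h := (abs_rpow_integrable hε (x - (-1)) (x - 1)).comp_sub_left x
    simpa using h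
  refine ⟨hint, ?_⟩
  have hsplit : (∫ ξ in (-1:ℝ)..1, |x - ξ| ^ (ε - 1)) =
      (∫ ξ in (-1:ℝ)..x, |x - ξ| ^ (ε - 1)) + ∫ ξ in x..(1:ℝ), |x - ξ| ^ (ε - 1) := by
    rw [integral_add_adjacent_intervals]
    · apply hint.mono_set
      rw [uIcc_of_le hx.1, uIcc_of_le (show (-1:ℝ) ≤ 1 by norm_num)]
      exact Icc_subset_Icc_right hx.2
    · apply hint.mono_set
      rw [uIcc_of_le hx.2, uIcc_of_le (show (-1:ℝ) ≤ 1 by norm_num)]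
      exact Icc_subset_Icc_left hx.1
  have h0 : (0:ℝ) ^ ε = 0 := Real.zero_rpow (ne_of_gt hε)
  have h1 : (∫ ξ in (-1:ℝ)..x, |x - ξ| ^ (ε - 1)) = (x + 1) ^ ε / ε := by
    have e1 : (∫ ξ in (-1:ℝ)..x, |x - ξ| ^ (ε - 1)) =
        ∫ ξ in (-1:ℝ)..x, (x - ξ) ^ (ε - 1) := by
      apply integral_congr
      intro ξ hξ
      rw [uIcc_of_le hx.1] at hξ
      dsimp only
      rw [abs_of_nonneg (by linarith [hξ.2])]
    rw [e1, integral_comp_sub_left (fun u => u ^ (ε - 1)) x]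
    rw [show x - x = (0:ℝ) by ring, show x - (-1) = x + 1 by ring]
    rw [integral_rpow (Or.inl (by linarith))]
    rw [show ε - 1 + 1 = ε by ring, h0]
    ring
  have h2 : (∫ ξ in x..(1:ℝ), |x - ξ| ^ (ε - 1)) = (1 - x) ^ ε / ε := by
    have e1 : (∫ ξ in x..(1:ℝ), |x - ξ| ^ (ε - 1)) =
        ∫ ξ in x..(1:ℝ), (ξ - x) ^ (ε - 1) := by
      apply integral_congr
      intro ξ hξ
      rw [uIcc_of_le hx.2] at hξ
      dsimp only
      rw [abs_sub_comm, abs_of_nonneg (by linarith [hξ.1])]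
    rw [e1, integral_comp_sub_right (fun u => u ^ (ε - 1)) x]
    rw [show x - x = (0:ℝ) by ring]
    rw [integral_rpow (Or.inl (by linarith))]
    rw [show ε - 1 + 1 = ε by ring, h0]
    ring
  have hb : ∀ t : ℝ, 0 ≤ t → t ≤ 2 → t ^ ε ≤ 2 := by
    intro t ht ht2
    calc t ^ ε ≤ 2 ^ ε := Real.rpow_le_rpow ht ht2 hε.le
      _ ≤ 2 ^ (1:ℝ) := Real.rpow_le_rpow_of_exponent_le one_le_two hε1
      _ = 2 := Real.rpow_one 2
  rw [hsplit, h1, h2]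
  have b1 : (x + 1) ^ ε ≤ 2 := hb _ (by linarith [hx.1]) (by linarith [hx.2])
  have b2 : (1 - x) ^ ε ≤ 2 := hb _ (by linarith [hx.2]) (by linarith [hx.1])
  rw [← add_div, div_le_div_iff₀ hε hε]
  nlinarith

local notation "II" => Set.Icc (-1:ℝ) 1

noncomputable def Qf (f' : ℝ → ℝ) (ξ t : ℝ) : ℝ := ∫ s in (0:ℝ)..1, f' (ξ + s * (t - ξ))
noncomputable def Rf (f2 : ℝ → ℝ) (ξ t : ℝ) : ℝ := ∫ s in (0:ℝ)..1, s * f2 (ξ + s * (t - ξ))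

section core

variable {f f' f2 : ℝ → ℝ} {ξ : ℝ}

lemma hmap_aux (hξ : ξ ∈ II) {t : ℝ} (ht : t ∈ II) : ∀ s ∈ Icc (0:ℝ) 1, ξ + s * (t - ξ) ∈ II := by
  intro s hs
  have := (convex_Icc (-1:ℝ) 1).add_smul_sub_mem hξ ht hs
  simpa [smul_eq_mul] using this

lemma Qint_aux (hc1 : ContinuousOn f' II) (hξ : ξ ∈ II) {t : ℝ} (ht : t ∈ II) :
    IntervalIntegrable (fun s => f' (ξ + s * (t - ξ))) volume 0 1 := by
  apply ContinuousOn.intervalIntegrable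
  rw [uIcc_of_le zero_le_one]
  exact hc1.comp (Continuous.continuousOn (by continuity)) (hmap_aux hξ ht)

lemma Rint_aux (hc2 : ContinuousOn f2 II) (hξ : ξ ∈ II) {t : ℝ} (ht : t ∈ II) :
    IntervalIntegrable (fun s => s * f2 (ξ + s * (t - ξ))) volume 0 1 := by
  apply ContinuousOn.intervalIntegrable
  rw [uIcc_of_le zero_le_one]
  exact continuousOn_id.mul (hc2.comp (Continuous.continuousOn (by continuity)) (hmap_aux hξ ht))

lemma Qf_slope (hd1 : ∀ t ∈ II, HasDerivWithinAt f (f' t) II t)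
    (hc1 : ContinuousOn f' II) (hξ : ξ ∈ II) {t : ℝ} (ht : t ∈ II) (hne : t ≠ ξ) :
    Qf f' ξ t = (f t - f ξ) / (t - ξ) := by
  have hfc : ContinuousOn f II := fun w hw => (hd1 w hw).continuousWithinAt
  have hFTC : (∫ s in (0:ℝ)..1, (t - ξ) * f' (ξ + s * (t - ξ))) = f t - f ξ := by
    have hcont : ContinuousOn (fun s => f (ξ + s * (t - ξ))) (Icc 0 1) :=
      hfc.comp (Continuous.continuousOn (by continuity)) (hmap_aux hξ ht)
    have hder : ∀ s ∈ Ioo (0:ℝ) 1, HasDerivWithinAt (fun s => f (ξ + s * (t - ξ)))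
        ((t - ξ) * f' (ξ + s * (t - ξ))) (Ioi s) s := by
      intro s hs
      have hin : HasDerivWithinAt (fun u : ℝ => ξ + u * (t - ξ)) (t - ξ) (Icc 0 1) s := by
        simpa using (((hasDerivWithinAt_id s (Icc (0:ℝ) 1)).mul_const (t - ξ)).const_add ξ)
      have hcomp := (hd1 _ (hmap_aux hξ ht s (Ioo_subset_Icc_self hs))).comp s hin
        (hmap_aux hξ ht)
      have := hcomp.mono_of_mem_nhdsWithin (Icc_mem_nhdsGT_of_mem ⟨hs.1.le, hs.2⟩)
      simpa [Function.comp_def, mul_comm] using this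
    have hint' : IntervalIntegrable (fun s => (t - ξ) * f' (ξ + s * (t - ξ))) volume 0 1 :=
      (Qint_aux hc1 hξ ht).const_mul _
    have hres := integral_eq_sub_of_hasDeriv_right_of_le zero_le_one hcont hder hint'
    rw [show ξ + 1 * (t - ξ) = t by ring, show ξ + 0 * (t - ξ) = ξ by ring] at hres
    exact hres
  have hmul : (t - ξ) * Qf f' ξ t = f t - f ξ := by
    rw [Qf, ← intervalIntegral.integral_const_mul]
    exact hFTC
  rw [eq_div_iff (sub_ne_zero.2 hne)]
  linarith [hmul]

lemma Qf_bound {K1 : ℝ} (hB1 : ∀ w ∈ II, |f' w| ≤ K1) (hξ : ξ ∈ II) {t : ℝ} (ht : t ∈ II) :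
    |Qf f' ξ t| ≤ K1 := by
  have h := norm_integral_le_of_norm_le_const (a := (0:ℝ)) (b := 1) (C := K1)
      (f := fun s => f' (ξ + s * (t - ξ))) ?_
  · rw [Qf]
    rw [Real.norm_eq_abs] at h
    simpa using h
  · intro s hs
    rw [uIoc_of_le zero_le_one] at hs
    rw [Real.norm_eq_abs]
    exact hB1 _ (hmap_aux hξ ht s (Ioc_subset_Icc_self hs))

lemma Rf_bound {K2 : ℝ} (hB2 : ∀ w ∈ II, |f2 w| ≤ K2) (hξ : ξ ∈ II) {t : ℝ} (ht : t ∈ II) :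
    |Rf f2 ξ t| ≤ K2 := by
  have hK2 : 0 ≤ K2 := le_trans (abs_nonneg _) (hB2 ξ (by simpa using hξ))
  have h := norm_integral_le_of_norm_le_const (a := (0:ℝ)) (b := 1) (C := K2)
      (f := fun s => s * f2 (ξ + s * (t - ξ))) ?_
  · rw [Rf]
    rw [Real.norm_eq_abs] at h
    simpa using h
  · intro s hs
    rw [uIoc_of_le zero_le_one] at hs
    rw [Real.norm_eq_abs, abs_mul]
    have h1 : |s| ≤ 1 := by rw [abs_of_pos hs.1]; exact hs.2
    have h2 : |f2 (ξ + s * (t - ξ))| ≤ K2 := hB2 _ (hmap_aux hξ ht s (Ioc_subset_Icc_self hs))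
    nlinarith [abs_nonneg (f2 (ξ + s * (t - ξ))), abs_nonneg s]


lemma Qf_quad {K2 K3 : ℝ} (hd2 : ∀ t ∈ II, HasDerivWithinAt f' (f2 t) II t)
    (hc1 : ContinuousOn f' II) (hc2 : ContinuousOn f2 II)
    (hB2 : ∀ w ∈ II, |f2 w| ≤ K2)
    (hK3 : 0 ≤ K3)
    (hlip2 : ∀ a ∈ II, ∀ w ∈ II, |f2 w - f2 a| ≤ K3 * |w - a|)
    (hξ : ξ ∈ II) {t u : ℝ} (ht : t ∈ II) (hu : u ∈ II) :
    |Qf f' ξ u - Qf f' ξ t - (u - t) * Rf f2 ξ t| ≤ K3 * (u - t) ^ 2 := by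
  have heq : Qf f' ξ u - Qf f' ξ t - (u - t) * Rf f2 ξ t =
      ∫ s in (0:ℝ)..1, (f' (ξ + s * (u - ξ)) - f' (ξ + s * (t - ξ))
        - (u - t) * (s * f2 (ξ + s * (t - ξ)))) := by
    rw [integral_sub ((Qint_aux hc1 hξ hu).sub (Qint_aux hc1 hξ ht))
        ((Rint_aux hc2 hξ ht).const_mul (u - t)),
      integral_sub (Qint_aux hc1 hξ hu) (Qint_aux hc1 hξ ht), intervalIntegral.integral_const_mul]
    rfl
  rw [heq]
  have h := norm_integral_le_of_norm_le_const (a := (0:ℝ)) (b := 1) (C := K3 * (u - t) ^ 2)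
      (f := fun s => f' (ξ + s * (u - ξ)) - f' (ξ + s * (t - ξ))
        - (u - t) * (s * f2 (ξ + s * (t - ξ)))) ?_
  · rw [Real.norm_eq_abs] at h
    simpa using h
  · intro s hs
    rw [uIoc_of_le zero_le_one] at hs
    have hs' : s ∈ Icc (0:ℝ) 1 := Ioc_subset_Icc_self hs
    set a := ξ + s * (t - ξ) with ha_def
    set b := ξ + s * (u - ξ) with hb_def
    have ha : a ∈ II := hmap_aux hξ ht s hs'
    have hb : b ∈ II := hmap_aux hξ hu s hs'
    have hsub : uIcc a b ⊆ II := uIcc_subset_Icc ha hb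
    have hTay := mvt_taylor (convex_uIcc a b)
      (fun w hw => (hd2 w (hsub hw)).mono hsub)
      (left_mem_uIcc) (right_mem_uIcc) (K := K3 * |b - a|)
      (fun w hw => le_trans (hlip2 a ha w (hsub hw))
        (mul_le_mul_of_nonneg_left (abs_sub_le_uIcc hw) hK3))
    have hba : b - a = s * (u - t) := by rw [ha_def, hb_def]; ring
    have hexp : (u - t) * (s * f2 a) = (b - a) * f2 a := by rw [hba]; ring
    rw [Real.norm_eq_abs, hexp]
    refine le_trans hTay ?_
    have h1 : |b - a| ≤ 1 * |u - t| := by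
      rw [hba, abs_mul]
      apply mul_le_mul_of_nonneg_right _ (abs_nonneg _)
      rw [abs_of_pos hs.1]; exact hs.2
    have h2 : (0:ℝ) ≤ |u - t| := abs_nonneg _
    have h3 : (0:ℝ) ≤ |b - a| := abs_nonneg _
    have h4 : |u - t| * |u - t| = (u - t) ^ 2 := by rw [abs_mul_abs_self]; ring
    have h5 : |b - a| * |b - a| ≤ |u - t| * |u - t| := by nlinarith
    calc K3 * |b - a| * |b - a| = K3 * (|b - a| * |b - a|) := by ring
      _ ≤ K3 * (|u - t| * |u - t|) := mul_le_mul_of_nonneg_left h5 hK3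
      _ = K3 * (u - t) ^ 2 := by rw [h4]

lemma Rf_lip {K3 : ℝ} (hc2 : ContinuousOn f2 II)
    (hK3 : 0 ≤ K3)
    (hlip2 : ∀ a ∈ II, ∀ w ∈ II, |f2 w - f2 a| ≤ K3 * |w - a|)
    (hξ : ξ ∈ II) {t u : ℝ} (ht : t ∈ II) (hu : u ∈ II) :
    |Rf f2 ξ u - Rf f2 ξ t| ≤ K3 * |u - t| := by
  have heq : Rf f2 ξ u - Rf f2 ξ t =
      ∫ s in (0:ℝ)..1, (s * f2 (ξ + s * (u - ξ)) - s * f2 (ξ + s * (t - ξ))) := by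
    rw [integral_sub (Rint_aux hc2 hξ hu) (Rint_aux hc2 hξ ht)]
    rfl
  rw [heq]
  have h := norm_integral_le_of_norm_le_const (a := (0:ℝ)) (b := 1) (C := K3 * |u - t|)
      (f := fun s => s * f2 (ξ + s * (u - ξ)) - s * f2 (ξ + s * (t - ξ))) ?_
  · rw [Real.norm_eq_abs] at h
    simpa using h
  · intro s hs
    rw [uIoc_of_le zero_le_one] at hs
    have hs' : s ∈ Icc (0:ℝ) 1 := Ioc_subset_Icc_self hs
    have ha : ξ + s * (t - ξ) ∈ II := hmap_aux hξ ht s hs'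
    have hb : ξ + s * (u - ξ) ∈ II := hmap_aux hξ hu s hs'
    rw [Real.norm_eq_abs]
    have e1 : s * f2 (ξ + s * (u - ξ)) - s * f2 (ξ + s * (t - ξ)) =
        s * (f2 (ξ + s * (u - ξ)) - f2 (ξ + s * (t - ξ))) := by ring
    rw [e1, abs_mul]
    have h1 : |s| ≤ 1 := by rw [abs_of_pos hs.1]; exact hs.2
    have h2 : |f2 (ξ + s * (u - ξ)) - f2 (ξ + s * (t - ξ))| ≤ K3 * (|s| * |u - t|) := by
      have := hlip2 _ ha _ hb
      rw [show ξ + s * (u - ξ) - (ξ + s * (t - ξ)) = s * (u - t) by ring, abs_mul] at this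
      exact this
    have h3 : (0:ℝ) ≤ |s| := abs_nonneg _
    have h4 : (0:ℝ) ≤ |u - t| := abs_nonneg _
    calc |s| * |f2 (ξ + s * (u - ξ)) - f2 (ξ + s * (t - ξ))|
        ≤ 1 * |f2 (ξ + s * (u - ξ)) - f2 (ξ + s * (t - ξ))| :=
          mul_le_mul_of_nonneg_right h1 (abs_nonneg _)
      _ = |f2 (ξ + s * (u - ξ)) - f2 (ξ + s * (t - ξ))| := one_mul _
      _ ≤ K3 * (|s| * |u - t|) := h2
      _ ≤ K3 * (1 * |u - t|) :=
          mul_le_mul_of_nonneg_left (mul_le_mul_of_nonneg_right h1 h4) hK3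
      _ = K3 * |u - t| := by ring

lemma Qf_hasDeriv {K2 K3 : ℝ} (hd2 : ∀ t ∈ II, HasDerivWithinAt f' (f2 t) II t)
    (hc1 : ContinuousOn f' II) (hc2 : ContinuousOn f2 II)
    (hB2 : ∀ w ∈ II, |f2 w| ≤ K2) (hK3 : 0 ≤ K3)
    (hlip2 : ∀ a ∈ II, ∀ w ∈ II, |f2 w - f2 a| ≤ K3 * |w - a|)
    (hξ : ξ ∈ II) {t : ℝ} (ht : t ∈ II) :
    HasDerivWithinAt (Qf f' ξ) (Rf f2 ξ t) II t :=
  quad_hasDerivWithinAt (fun u hu => Qf_quad hd2 hc1 hc2 hB2 hK3 hlip2 hξ ht hu)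

lemma psi_lip {a a' b b' A B : ℝ} (hA : 0 ≤ A) (hB : 0 ≤ B) (ha : |a| ≤ A) (ha' : |a'| ≤ A)
    (hb : |b| ≤ B) :
    |(1 + a ^ 2)⁻¹ * (2 * a * b) - (1 + a' ^ 2)⁻¹ * (2 * a' * b')| ≤
      2 * B * (1 + A ^ 2) * |a - a'| + |b - b'| := by
  have hpa : (0:ℝ) < 1 + a ^ 2 := by positivity
  have hpa' : (0:ℝ) < 1 + a' ^ 2 := by positivity
  have key : (1 + a ^ 2)⁻¹ * (2 * a * b) - (1 + a' ^ 2)⁻¹ * (2 * a' * b') =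
      2 * b * ((a - a') * (1 - a * a')) / ((1 + a ^ 2) * (1 + a' ^ 2))
      + (1 + a' ^ 2)⁻¹ * (2 * a' * (b - b')) := by
    field_simp
    ring
  rw [key]
  have h2 : |(1 + a' ^ 2)⁻¹ * (2 * a' * (b - b'))| ≤ |b - b'| := kernel_quot_abs_le a' (b - b')
  have h1 : |2 * b * ((a - a') * (1 - a * a')) / ((1 + a ^ 2) * (1 + a' ^ 2))| ≤
      2 * B * (1 + A ^ 2) * |a - a'| := by
    rw [abs_div, abs_of_pos (by positivity : (0:ℝ) < (1 + a ^ 2) * (1 + a' ^ 2))]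
    have hden : (1:ℝ) ≤ (1 + a ^ 2) * (1 + a' ^ 2) := by nlinarith [sq_nonneg a, sq_nonneg a']
    have hnum : |2 * b * ((a - a') * (1 - a * a'))| ≤ 2 * B * (1 + A ^ 2) * |a - a'| := by
      rw [abs_mul, abs_mul, abs_mul]
      have e2 : |(2:ℝ) * b| = 2 * |b| := by rw [abs_mul]; simp
      have h1aa : |1 - a * a'| ≤ 1 + A ^ 2 := by
        have := abs_sub (1:ℝ) (a * a')
        have haa : |a * a'| ≤ A * A := by
          rw [abs_mul]; exact mul_le_mul ha ha' (abs_nonneg _) hA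
        calc |1 - a * a'| ≤ |(1:ℝ)| + |a * a'| := abs_sub _ _
          _ ≤ 1 + A ^ 2 := by rw [abs_one]; nlinarith
      rw [abs_two]
      calc 2 * |b| * (|a - a'| * |1 - a * a'|) ≤ 2 * B * (|a - a'| * (1 + A ^ 2)) := by
            apply mul_le_mul (by linarith) (mul_le_mul_of_nonneg_left h1aa (abs_nonneg _))
              (by positivity) (by positivity)
        _ = 2 * B * (1 + A ^ 2) * |a - a'| := by ring
    calc |2 * b * ((a - a') * (1 - a * a'))| / ((1 + a ^ 2) * (1 + a' ^ 2))
        ≤ |2 * b * ((a - a') * (1 - a * a'))| / 1 := by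
          exact div_le_div_of_nonneg_left (abs_nonneg _) one_pos hden
      _ = |2 * b * ((a - a') * (1 - a * a'))| := by rw [div_one]
      _ ≤ 2 * B * (1 + A ^ 2) * |a - a'| := hnum
  calc |2 * b * ((a - a') * (1 - a * a')) / ((1 + a ^ 2) * (1 + a' ^ 2))
      + (1 + a' ^ 2)⁻¹ * (2 * a' * (b - b'))|
      ≤ |2 * b * ((a - a') * (1 - a * a')) / ((1 + a ^ 2) * (1 + a' ^ 2))|
        + |(1 + a' ^ 2)⁻¹ * (2 * a' * (b - b'))| := abs_add_le _ _
    _ ≤ 2 * B * (1 + A ^ 2) * |a - a'| + |b - b'| := add_le_add h1 h2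

lemma Rf_eq (hd1 : ∀ t ∈ II, HasDerivWithinAt f (f' t) II t)
    (hd2 : ∀ t ∈ II, HasDerivWithinAt f' (f2 t) II t)
    (hc1 : ContinuousOn f' II) (hc2 : ContinuousOn f2 II)
    {K2 K3 : ℝ} (hB2 : ∀ w ∈ II, |f2 w| ≤ K2) (hK3 : 0 ≤ K3)
    (hlip2 : ∀ a ∈ II, ∀ w ∈ II, |f2 w - f2 a| ≤ K3 * |w - a|)
    (hξ : ξ ∈ II) {x : ℝ} (hx : x ∈ II) (hne : x ≠ ξ) :
    Rf f2 ξ x = (f' x - (f x - f ξ) / (x - ξ)) / (x - ξ) := by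
  have hIu : UniqueDiffOn ℝ II := uniqueDiffOn_Icc (by norm_num)
  have hxξ : x - ξ ≠ 0 := sub_ne_zero.2 hne
  have hσ : HasDerivWithinAt (fun u => (f u - f ξ) / (u - ξ))
      ((f' x * (x - ξ) - (f x - f ξ) * 1) / (x - ξ) ^ 2) II x :=
    ((hd1 x hx).sub_const (f ξ)).div ((hasDerivWithinAt_id x II).sub_const ξ) hxξ
  have hQd : HasDerivWithinAt (Qf f' ξ) (Rf f2 ξ x) II x :=
    Qf_hasDeriv hd2 hc1 hc2 hB2 hK3 hlip2 hξ hx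
  have hev : (fun u => (f u - f ξ) / (u - ξ)) =ᶠ[nhdsWithin x II] (Qf f' ξ) := by
    have hne' : ∀ᶠ u in nhds x, u ≠ ξ := eventually_ne_nhds hne
    filter_upwards [eventually_mem_nhdsWithin, hne'.filter_mono nhdsWithin_le_nhds]
      with u hu hu2
    exact (Qf_slope hd1 hc1 hξ hu hu2).symm
  have hQσ : HasDerivWithinAt (fun u => (f u - f ξ) / (u - ξ)) (Rf f2 ξ x) II x :=
    hQd.congr_of_eventuallyEq hev (Qf_slope hd1 hc1 hξ hx hne).symm
  have h1 := hσ.derivWithin (hIu x hx)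
  have h2 := hQσ.derivWithin (hIu x hx)
  rw [h1] at h2
  rw [← h2]
  field_simp
  try ring
  try exact Or.inl trivial

lemma per_xi
    (hd1 : ∀ t ∈ II, HasDerivWithinAt f (f' t) II t)
    (hd2 : ∀ t ∈ II, HasDerivWithinAt f' (f2 t) II t)
    (hc1 : ContinuousOn f' II) (hc2 : ContinuousOn f2 II)
    {K1 K2 K3 : ℝ} (hK1 : 0 ≤ K1) (hK2 : 0 ≤ K2) (hK3 : 0 ≤ K3)
    (hB1 : ∀ w ∈ II, |f' w| ≤ K1) (hB2 : ∀ w ∈ II, |f2 w| ≤ K2)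
    (hlip2 : ∀ a ∈ II, ∀ w ∈ II, |f2 w - f2 a| ≤ K3 * |w - a|)
    {x y ξ : ℝ} (hx : x ∈ II) (hy : y ∈ II) (hξ : ξ ∈ II)
    (hξx : ξ ≠ x) (hξy : ξ ≠ y) :
    |Real.log (1 + ((f y - f ξ) / (y - ξ)) ^ 2) - Real.log (1 + ((f x - f ξ) / (x - ξ)) ^ 2)
      - (y - x) * ((1 + ((f x - f ξ) / (x - ξ)) ^ 2)⁻¹ *
          (2 * ((f x - f ξ) / (x - ξ)) * ((f' x - (f x - f ξ) / (x - ξ)) / (x - ξ))))|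
      ≤ (2 * K2 * (1 + K1 ^ 2) * (K2 + 2 * K3) + K3) * (y - x) ^ 2 := by
  set CD : ℝ := 2 * K2 * (1 + K1 ^ 2) * (K2 + 2 * K3) + K3 with hCDdef
  have hCD : 0 ≤ CD := by positivity
  -- derivative of L t := log (1 + (Qf t)^2)
  have hLd : ∀ t ∈ II, HasDerivWithinAt (fun t => Real.log (1 + Qf f' ξ t ^ 2))
      ((1 + Qf f' ξ t ^ 2)⁻¹ * (2 * Qf f' ξ t * Rf f2 ξ t)) II t := by
    intro t ht
    have h1 : HasDerivWithinAt (fun t => 1 + Qf f' ξ t ^ 2)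
        (2 * Qf f' ξ t * Rf f2 ξ t) II t := by
      have := ((Qf_hasDeriv hd2 hc1 hc2 hB2 hK3 hlip2 hξ ht).pow 2).const_add 1
      simpa using this
    have hpos : (1 + Qf f' ξ t ^ 2) ≠ 0 := by positivity
    have := (Real.hasDerivAt_log hpos).comp_hasDerivWithinAt t h1
    exact this
  -- Lipschitz bound for Q
  have hQlip : ∀ t ∈ II, ∀ u ∈ II, |Qf f' ξ u - Qf f' ξ t| ≤ (K2 + 2 * K3) * |u - t| := by
    intro t ht u hu
    have h1 := Qf_quad hd2 hc1 hc2 hB2 hK3 hlip2 hξ ht hu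
    have h2 := Rf_bound hB2 hξ ht
    have h3 : |u - t| ≤ 2 := by
      rw [abs_le]; constructor <;> [linarith [ht.1, ht.2, hu.1, hu.2]; linarith [ht.1, ht.2, hu.1, hu.2]]
    have h4 : |Qf f' ξ u - Qf f' ξ t| ≤ |(u - t) * Rf f2 ξ t| + K3 * (u - t) ^ 2 := by
      have := abs_sub_abs_le_abs_sub (Qf f' ξ u - Qf f' ξ t) ((u - t) * Rf f2 ξ t)
      calc |Qf f' ξ u - Qf f' ξ t|
          ≤ |Qf f' ξ u - Qf f' ξ t - (u - t) * Rf f2 ξ t| + |(u - t) * Rf f2 ξ t| := by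
            have := abs_add_le (Qf f' ξ u - Qf f' ξ t - (u - t) * Rf f2 ξ t) ((u - t) * Rf f2 ξ t)
            simpa using this
        _ ≤ |(u - t) * Rf f2 ξ t| + K3 * (u - t) ^ 2 := by linarith
    have h5 : |(u - t) * Rf f2 ξ t| ≤ K2 * |u - t| := by
      rw [abs_mul]
      calc |u - t| * |Rf f2 ξ t| ≤ |u - t| * K2 :=
            mul_le_mul_of_nonneg_left h2 (abs_nonneg _)
        _ = K2 * |u - t| := by ring
    have h6 : K3 * (u - t) ^ 2 ≤ 2 * K3 * |u - t| := by
      have : (u - t) ^ 2 = |u - t| * |u - t| := by rw [abs_mul_abs_self]; ring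
      rw [this]
      have h7 := mul_le_mul_of_nonneg_right h3 (abs_nonneg (u - t))
      calc K3 * (|u - t| * |u - t|) ≤ K3 * (2 * |u - t|) :=
            mul_le_mul_of_nonneg_left h7 hK3
        _ = 2 * K3 * |u - t| := by ring
    calc |Qf f' ξ u - Qf f' ξ t| ≤ |(u - t) * Rf f2 ξ t| + K3 * (u - t) ^ 2 := h4
      _ ≤ K2 * |u - t| + 2 * K3 * |u - t| := by linarith
      _ = (K2 + 2 * K3) * |u - t| := by ring
  -- Lipschitz bound for D
  have hDlip : ∀ t ∈ II, ∀ u ∈ II,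
      |(1 + Qf f' ξ u ^ 2)⁻¹ * (2 * Qf f' ξ u * Rf f2 ξ u)
        - (1 + Qf f' ξ t ^ 2)⁻¹ * (2 * Qf f' ξ t * Rf f2 ξ t)| ≤ CD * |u - t| := by
    intro t ht u hu
    have h := psi_lip (b' := Rf f2 ξ t) hK1 hK2 (Qf_bound hB1 hξ hu) (Qf_bound hB1 hξ ht) (Rf_bound hB2 hξ hu)
    refine le_trans h ?_
    have h1 := hQlip t ht u hu
    have h2 := Rf_lip hc2 hK3 hlip2 hξ ht hu
    have h3 : 0 ≤ 2 * K2 * (1 + K1 ^ 2) := by positivity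
    calc 2 * K2 * (1 + K1 ^ 2) * |Qf f' ξ u - Qf f' ξ t| + |Rf f2 ξ u - Rf f2 ξ t|
        ≤ 2 * K2 * (1 + K1 ^ 2) * ((K2 + 2 * K3) * |u - t|) + K3 * |u - t| := by
          have := mul_le_mul_of_nonneg_left h1 h3
          linarith
      _ = CD * |u - t| := by rw [hCDdef]; ring
  -- Taylor estimate for L between x and y
  have hsub : uIcc x y ⊆ II := uIcc_subset_Icc hx hy
  have hTay := mvt_taylor (convex_uIcc x y)
      (fun w hw => (hLd w (hsub hw)).mono hsub)
      (left_mem_uIcc) (right_mem_uIcc) (K := CD * |y - x|)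
      (fun w hw => le_trans (hDlip x hx w (hsub hw))
        (mul_le_mul_of_nonneg_left (abs_sub_le_uIcc hw) hCD))
  have hQx : Qf f' ξ x = (f x - f ξ) / (x - ξ) := Qf_slope hd1 hc1 hξ hx hξx.symm
  have hQy : Qf f' ξ y = (f y - f ξ) / (y - ξ) := Qf_slope hd1 hc1 hξ hy hξy.symm
  have hRx : Rf f2 ξ x = (f' x - (f x - f ξ) / (x - ξ)) / (x - ξ) :=
    Rf_eq hd1 hd2 hc1 hc2 hB2 hK3 hlip2 hξ hx hξx.symm
  rw [hQx, hQy, hRx] at hTay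
  have hfin : CD * |y - x| * |y - x| = CD * (y - x) ^ 2 := by
    rw [mul_assoc, abs_mul_abs_self]; ring
  rw [hfin] at hTay
  exact hTay

lemma ae_ne_vol (x : ℝ) : ∀ᵐ ξ : ℝ ∂(volume : Measure ℝ), ξ ≠ x := by
  rw [ae_iff]
  have h0 : {ξ : ℝ | ¬ ξ ≠ x} = {x} := by ext ξ; simp
  rw [h0]
  exact measure_singleton x

lemma ae_ne_res (x : ℝ) : ∀ᵐ ξ ∂(volume.restrict (Ioc (-1:ℝ) 1)), ξ ≠ x :=
  (ae_ne_vol x).filter_mono (ae_mono Measure.restrict_le_self)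

lemma aesm_of_contOn_diff {h : ℝ → ℝ} {T : Set ℝ} (hT : T.Countable)
    (hc : ContinuousOn h (Icc (-1:ℝ) 1 \ T)) :
    AEStronglyMeasurable h (volume.restrict (Ioc (-1:ℝ) 1)) := by
  have hTm : MeasurableSet T := hT.measurableSet
  have h1 : AEStronglyMeasurable h (volume.restrict (Ioc (-1:ℝ) 1 \ T)) :=
    (hc.mono (diff_subset_diff_left Ioc_subset_Icc_self)).aestronglyMeasurable
      (measurableSet_Ioc.diff hTm)
  have h2 : (Ioc (-1:ℝ) 1 \ T : Set ℝ) =ᵐ[volume] Ioc (-1:ℝ) 1 :=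
    diff_ae_eq_self.mpr (measure_mono_null inter_subset_right (hT.measure_zero _))
  rwa [Measure.restrict_congr_set h2] at h1

lemma ii_of_bound {h bound : ℝ → ℝ}
    (hm : AEStronglyMeasurable h (volume.restrict (Ioc (-1:ℝ) 1)))
    (hb : IntervalIntegrable bound volume (-1) 1)
    (hpt : ∀ᵐ ξ ∂(volume.restrict (Ioc (-1:ℝ) 1)), |h ξ| ≤ bound ξ) :
    IntervalIntegrable h volume (-1) 1 := by
  rw [intervalIntegrable_iff_integrableOn_Ioc_of_le (by norm_num)]
  rw [intervalIntegrable_iff_integrableOn_Ioc_of_le (by norm_num)] at hb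
  exact hb.mono' hm (by simpa [Real.norm_eq_abs] using hpt)

/-- For f ∈ C^∞[−1,1], g ∈ C[−1,1] and ε ∈ (0,1), the function
Φ(x) = ∫ g(ξ) log(1 + ((f(x)−f(ξ))/(x−ξ))²) dξ satisfies
‖Φ‖_{C¹[−1,1]} ≤ C ε⁻¹ ‖f‖_{C^{1+ε}} ‖g‖_C with an absolute constant C. -/
theorem stmt18 : ∃ C : ℝ, 0 < C ∧
    ∀ (f f' g : ℝ → ℝ) (ε M Mg : ℝ), ε ∈ Set.Ioo (0:ℝ) 1 →
      ContDiffOn ℝ (⊤ : ℕ∞) f (Set.Icc (-1:ℝ) 1) →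
      (∀ x ∈ Set.Icc (-1:ℝ) 1, HasDerivWithinAt f (f' x) (Set.Icc (-1:ℝ) 1) x) →
      ContinuousOn g (Set.Icc (-1:ℝ) 1) →
      (∀ x ∈ Set.Icc (-1:ℝ) 1, |f x| ≤ M) →
      (∀ x ∈ Set.Icc (-1:ℝ) 1, |f' x| ≤ M) →
      (∀ x ∈ Set.Icc (-1:ℝ) 1, ∀ y ∈ Set.Icc (-1:ℝ) 1, |f' x - f' y| ≤ M * |x - y| ^ ε) →
      (∀ x ∈ Set.Icc (-1:ℝ) 1, |g x| ≤ Mg) →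
      ∃ Φ' : ℝ → ℝ,
        (∀ x ∈ Set.Icc (-1:ℝ) 1,
          HasDerivWithinAt
            (fun x => ∫ ξ in (-1:ℝ)..1, g ξ * Real.log (1 + ((f x - f ξ) / (x - ξ))^2))
            (Φ' x) (Set.Icc (-1:ℝ) 1) x) ∧
        ∀ x ∈ Set.Icc (-1:ℝ) 1,
          |∫ ξ in (-1:ℝ)..1, g ξ * Real.log (1 + ((f x - f ξ) / (x - ξ))^2)| + |Φ' x|
            ≤ C * ε⁻¹ * M * Mg := by
  refine ⟨8, by norm_num, ?_⟩
  intro f f' g ε M Mg hε hf hf' hg hfM hf'M hHol hgM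
  obtain ⟨hε0, hε1⟩ := hε
  have hM : 0 ≤ M := le_trans (abs_nonneg _) (hfM 0 (by norm_num))
  have hMg : 0 ≤ Mg := le_trans (abs_nonneg _) (hgM 0 (by norm_num))
  have hIu : UniqueDiffOn ℝ (Icc (-1:ℝ) 1) := uniqueDiffOn_Icc (by norm_num)
  have hfc : ContinuousOn f (Icc (-1:ℝ) 1) := hf.continuousOn
  have hf'sm : ContDiffOn ℝ (⊤ : ℕ∞) f' (Icc (-1:ℝ) 1) :=
    (hf.derivWithin hIu (by simp)).congr fun t ht => ((hf' t ht).derivWithin (hIu t ht)).symm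
  have hc1 : ContinuousOn f' (Icc (-1:ℝ) 1) := hf'sm.continuousOn
  have hd2 : ∀ t ∈ Icc (-1:ℝ) 1,
      HasDerivWithinAt f' (derivWithin f' (Icc (-1:ℝ) 1) t) (Icc (-1:ℝ) 1) t :=
    fun t ht => ((hf'sm.differentiableOn (by simp)) t ht).hasDerivWithinAt
  have hf2sm : ContDiffOn ℝ (⊤ : ℕ∞) (derivWithin f' (Icc (-1:ℝ) 1)) (Icc (-1:ℝ) 1) :=
    hf'sm.derivWithin hIu (by simp)
  have hc2 : ContinuousOn (derivWithin f' (Icc (-1:ℝ) 1)) (Icc (-1:ℝ) 1) := hf2sm.continuousOn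
  have hd3 : ∀ t ∈ Icc (-1:ℝ) 1,
      HasDerivWithinAt (derivWithin f' (Icc (-1:ℝ) 1))
        (derivWithin (derivWithin f' (Icc (-1:ℝ) 1)) (Icc (-1:ℝ) 1) t) (Icc (-1:ℝ) 1) t :=
    fun t ht => ((hf2sm.differentiableOn (by simp)) t ht).hasDerivWithinAt
  have hc3 : ContinuousOn (derivWithin (derivWithin f' (Icc (-1:ℝ) 1)) (Icc (-1:ℝ) 1))
      (Icc (-1:ℝ) 1) := by
    have hf3sm : ContDiffOn ℝ (⊤ : ℕ∞) (derivWithin (derivWithin f' (Icc (-1:ℝ) 1)) (Icc (-1:ℝ) 1))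
        (Icc (-1:ℝ) 1) := hf2sm.derivWithin hIu (by simp)
    exact hf3sm.continuousOn
  obtain ⟨K2', hK2'⟩ := isCompact_Icc.exists_bound_of_continuousOn hc2
  obtain ⟨K3', hK3'⟩ := isCompact_Icc.exists_bound_of_continuousOn hc3
  have hK2 : (0:ℝ) ≤ max K2' 0 := le_max_right _ _
  have hK3 : (0:ℝ) ≤ max K3' 0 := le_max_right _ _
  have hB2 : ∀ w ∈ Icc (-1:ℝ) 1, |derivWithin f' (Icc (-1:ℝ) 1) w| ≤ max K2' 0 := fun w hw =>
    le_trans (by have := hK2' w hw; rwa [Real.norm_eq_abs] at this) (le_max_left _ _)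
  have hB3 : ∀ w ∈ Icc (-1:ℝ) 1,
      |derivWithin (derivWithin f' (Icc (-1:ℝ) 1)) (Icc (-1:ℝ) 1) w| ≤ max K3' 0 := fun w hw =>
    le_trans (by have := hK3' w hw; rwa [Real.norm_eq_abs] at this) (le_max_left _ _)
  have hlip2 : ∀ a ∈ Icc (-1:ℝ) 1, ∀ w ∈ Icc (-1:ℝ) 1,
      |derivWithin f' (Icc (-1:ℝ) 1) w - derivWithin f' (Icc (-1:ℝ) 1) a|
        ≤ max K3' 0 * |w - a| :=
    fun a ha w hw => mvt_lip (convex_Icc _ _) hd3 hB3 ha hw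
  have hslope : ∀ x ∈ Icc (-1:ℝ) 1, ∀ ξ ∈ Icc (-1:ℝ) 1, ξ ≠ x →
      |(f x - f ξ) / (x - ξ)| ≤ M := by
    intro x hx ξ hξ hne
    have h1 : |f x - f ξ| ≤ M * |x - ξ| := mvt_lip (convex_Icc _ _) hf' hf'M hξ hx
    rw [abs_div, div_le_iff₀ (abs_pos.2 (sub_ne_zero.2 (Ne.symm hne)))]
    exact h1
  have hDbd : ∀ x ∈ Icc (-1:ℝ) 1, ∀ ξ ∈ Icc (-1:ℝ) 1, ξ ≠ x →
      |((1 + ((f x - f ξ) / (x - ξ)) ^ 2)⁻¹ * (2 * ((f x - f ξ) / (x - ξ)) * ((f' x - ((f x - f ξ) / (x - ξ))) / (x - ξ))))| ≤ M * |x - ξ| ^ (ε - 1) := by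
    intro x hx ξ hξ hne
    have hxξ0 : x - ξ ≠ 0 := sub_ne_zero.2 (Ne.symm hne)
    have habs0 : (0:ℝ) < |x - ξ| := abs_pos.2 hxξ0
    refine le_trans (kernel_quot_abs_le ((f x - f ξ) / (x - ξ)) ((f' x - ((f x - f ξ) / (x - ξ))) / (x - ξ))) ?_
    have hsub : uIcc x ξ ⊆ Icc (-1:ℝ) 1 := uIcc_subset_Icc hx hξ
    have hT := mvt_taylor (convex_uIcc x ξ) (fun w hw => (hf' w (hsub hw)).mono hsub)
        left_mem_uIcc right_mem_uIcc (K := M * |ξ - x| ^ ε)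
        (fun w hw => le_trans (hHol w (hsub hw) x hx)
          (mul_le_mul_of_nonneg_left
            (Real.rpow_le_rpow (abs_nonneg _) (abs_sub_le_uIcc hw) hε0.le) hM))
    have hkey : (f' x - ((f x - f ξ) / (x - ξ))) / (x - ξ)
        = (f ξ - f x - (ξ - x) * f' x) / ((x - ξ) * (x - ξ)) := by
      field_simp
      ring
    rw [hkey, abs_div, div_le_iff₀ (abs_pos.2 (mul_ne_zero hxξ0 hxξ0))]
    rw [abs_mul]
    rw [abs_sub_comm ξ x] at hT
    refine le_trans hT ?_
    rw [Real.rpow_sub_one (ne_of_gt habs0)]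
    have hne0 : |x - ξ| ≠ 0 := ne_of_gt habs0
    apply le_of_eq
    field_simp
  have hKcont : ∀ x : ℝ, ContinuousOn
      (fun ξ => g ξ * Real.log (1 + ((f x - f ξ) / (x - ξ)) ^ 2)) (Icc (-1:ℝ) 1 \ {x}) := by
    intro x
    have hqc : ContinuousOn (fun ξ => (f x - f ξ) / (x - ξ)) (Icc (-1:ℝ) 1 \ {x}) := by
      apply ContinuousOn.div (continuousOn_const.sub (hfc.mono diff_subset))
        (continuousOn_const.sub continuousOn_id)
      intro ξ hξ
      exact sub_ne_zero.2 fun hcon => hξ.2 (mem_singleton_iff.mpr hcon.symm)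
    exact (hg.mono diff_subset).mul
      (ContinuousOn.log (continuousOn_const.add (hqc.pow 2))
        (fun ξ hξ => by positivity))
  have hDcont : ∀ x : ℝ, ContinuousOn
      (fun ξ => g ξ * ((1 + ((f x - f ξ) / (x - ξ)) ^ 2)⁻¹ * (2 * ((f x - f ξ) / (x - ξ)) * ((f' x - ((f x - f ξ) / (x - ξ))) / (x - ξ))))) (Icc (-1:ℝ) 1 \ {x}) := by
    intro x
    have hden : ∀ ξ ∈ Icc (-1:ℝ) 1 \ {x}, x - ξ ≠ 0 := by
      intro ξ hξ
      exact sub_ne_zero.2 fun hcon => hξ.2 (mem_singleton_iff.mpr hcon.symm)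
    have hqc : ContinuousOn (fun ξ => (f x - f ξ) / (x - ξ)) (Icc (-1:ℝ) 1 \ {x}) :=
      ContinuousOn.div (continuousOn_const.sub (hfc.mono diff_subset))
        (continuousOn_const.sub continuousOn_id) hden
    have hinv : ContinuousOn (fun ξ => (1 + ((f x - f ξ) / (x - ξ)) ^ 2)⁻¹) (Icc (-1:ℝ) 1 \ {x}) :=
      (continuousOn_const.add (hqc.pow 2)).inv₀ (fun ξ hξ => (by positivity : (0:ℝ) < 1 + ((f x - f ξ) / (x - ξ)) ^ 2).ne')
    have hr : ContinuousOn (fun ξ => (f' x - ((f x - f ξ) / (x - ξ))) / (x - ξ)) (Icc (-1:ℝ) 1 \ {x}) :=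
      ContinuousOn.div (continuousOn_const.sub hqc)
        (continuousOn_const.sub continuousOn_id) hden
    exact (hg.mono diff_subset).mul (hinv.mul ((continuousOn_const.mul hqc).mul hr))
  have hKint : ∀ x ∈ Icc (-1:ℝ) 1, IntervalIntegrable
      (fun ξ => g ξ * Real.log (1 + ((f x - f ξ) / (x - ξ)) ^ 2)) volume (-1) 1 := by
    intro x hx
    apply ii_of_bound (aesm_of_contOn_diff (countable_singleton x) (hKcont x))
      (_root_.intervalIntegrable_const (c := Mg * (2 * M)))
    filter_upwards [ae_restrict_mem measurableSet_Ioc, ae_ne_res x] with ξ h1 h2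
    have hξI : ξ ∈ Icc (-1:ℝ) 1 := Ioc_subset_Icc_self h1
    rw [abs_mul]
    have hlog : |Real.log (1 + ((f x - f ξ) / (x - ξ)) ^ 2)| ≤ 2 * M := by
      rw [abs_of_nonneg (Real.log_nonneg (by nlinarith [sq_nonneg ((f x - f ξ) / (x - ξ))]))]
      exact log_one_add_sq_le hM (hslope x hx ξ hξI h2)
    exact mul_le_mul (hgM ξ hξI) hlog (abs_nonneg _) hMg
  have hDint : ∀ x ∈ Icc (-1:ℝ) 1, IntervalIntegrable
      (fun ξ => g ξ * ((1 + ((f x - f ξ) / (x - ξ)) ^ 2)⁻¹ * (2 * ((f x - f ξ) / (x - ξ)) * ((f' x - ((f x - f ξ) / (x - ξ))) / (x - ξ))))) volume (-1) 1 := by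
    intro x hx
    apply ii_of_bound (aesm_of_contOn_diff (countable_singleton x) (hDcont x))
      ((rpow_integral_bound hx hε0 hε1.le).1.const_mul (Mg * M))
    filter_upwards [ae_restrict_mem measurableSet_Ioc, ae_ne_res x] with ξ h1 h2
    have hξI : ξ ∈ Icc (-1:ℝ) 1 := Ioc_subset_Icc_self h1
    rw [abs_mul]
    calc |g ξ| * |((1 + ((f x - f ξ) / (x - ξ)) ^ 2)⁻¹ * (2 * ((f x - f ξ) / (x - ξ)) * ((f' x - ((f x - f ξ) / (x - ξ))) / (x - ξ))))|
        ≤ Mg * (M * |x - ξ| ^ (ε - 1)) :=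
          mul_le_mul (hgM ξ hξI) (hDbd x hx ξ hξI h2) (abs_nonneg _) hMg
      _ = Mg * M * |x - ξ| ^ (ε - 1) := by ring
  refine ⟨fun x => ∫ ξ in (-1:ℝ)..1, g ξ * ((1 + ((f x - f ξ) / (x - ξ)) ^ 2)⁻¹ * (2 * ((f x - f ξ) / (x - ξ)) * ((f' x - ((f x - f ξ) / (x - ξ))) / (x - ξ)))), ?_, ?_⟩
  · intro x hx
    have hCD : (0:ℝ) ≤ 2 * max K2' 0 * (1 + M ^ 2) * (max K2' 0 + 2 * max K3' 0) + max K3' 0 := by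
      positivity
    apply quad_hasDerivWithinAt
      (C := Mg * (2 * max K2' 0 * (1 + M ^ 2) * (max K2' 0 + 2 * max K3' 0) + max K3' 0) * 2)
    intro y hy
    dsimp only
    have hid : (∫ ξ in (-1:ℝ)..1, g ξ * Real.log (1 + ((f y - f ξ) / (y - ξ)) ^ 2))
        - (∫ ξ in (-1:ℝ)..1, g ξ * Real.log (1 + ((f x - f ξ) / (x - ξ)) ^ 2))
        - (y - x) * (∫ ξ in (-1:ℝ)..1, g ξ * ((1 + ((f x - f ξ) / (x - ξ)) ^ 2)⁻¹ * (2 * ((f x - f ξ) / (x - ξ)) * ((f' x - ((f x - f ξ) / (x - ξ))) / (x - ξ)))))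
        = ∫ ξ in (-1:ℝ)..1, (g ξ * Real.log (1 + ((f y - f ξ) / (y - ξ)) ^ 2)
            - g ξ * Real.log (1 + ((f x - f ξ) / (x - ξ)) ^ 2)
            - (y - x) * (g ξ * ((1 + ((f x - f ξ) / (x - ξ)) ^ 2)⁻¹ * (2 * ((f x - f ξ) / (x - ξ)) * ((f' x - ((f x - f ξ) / (x - ξ))) / (x - ξ)))))) := by
      rw [integral_sub ((hKint y hy).sub (hKint x hx)) ((hDint x hx).const_mul (y - x)),
        integral_sub (hKint y hy) (hKint x hx), intervalIntegral.integral_const_mul]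
    rw [hid]
    have hb := norm_integral_le_of_norm_le_const_ae (a := (-1:ℝ)) (b := 1)
        (C := Mg * ((2 * max K2' 0 * (1 + M ^ 2) * (max K2' 0 + 2 * max K3' 0) + max K3' 0)
          * (y - x) ^ 2))
        (f := fun ξ => g ξ * Real.log (1 + ((f y - f ξ) / (y - ξ)) ^ 2)
            - g ξ * Real.log (1 + ((f x - f ξ) / (x - ξ)) ^ 2)
            - (y - x) * (g ξ * ((1 + ((f x - f ξ) / (x - ξ)) ^ 2)⁻¹ * (2 * ((f x - f ξ) / (x - ξ)) * ((f' x - ((f x - f ξ) / (x - ξ))) / (x - ξ)))))) ?_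
    · rw [Real.norm_eq_abs] at hb
      refine le_trans hb ?_
      rw [show |(1:ℝ) - (-1)| = 2 by norm_num]
      apply le_of_eq
      ring
    · filter_upwards [ae_ne_vol x, ae_ne_vol y] with ξ hnex hney hmem
      rw [uIoc_of_le (by norm_num : (-1:ℝ) ≤ 1)] at hmem
      have hξI : ξ ∈ Icc (-1:ℝ) 1 := Ioc_subset_Icc_self hmem
      have hper := per_xi hf' hd2 hc1 hc2 hM hK2 hK3 hf'M hB2 hlip2 hx hy hξI hnex hney
      rw [Real.norm_eq_abs]
      calc |g ξ * Real.log (1 + ((f y - f ξ) / (y - ξ)) ^ 2)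
            - g ξ * Real.log (1 + ((f x - f ξ) / (x - ξ)) ^ 2)
            - (y - x) * (g ξ * ((1 + ((f x - f ξ) / (x - ξ)) ^ 2)⁻¹ * (2 * ((f x - f ξ) / (x - ξ)) * ((f' x - ((f x - f ξ) / (x - ξ))) / (x - ξ)))))|
          = |g ξ| * |Real.log (1 + ((f y - f ξ) / (y - ξ)) ^ 2) - Real.log (1 + ((f x - f ξ) / (x - ξ)) ^ 2)
              - (y - x) * ((1 + ((f x - f ξ) / (x - ξ)) ^ 2)⁻¹ * (2 * ((f x - f ξ) / (x - ξ)) * ((f' x - ((f x - f ξ) / (x - ξ))) / (x - ξ))))| := by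
            rw [← abs_mul]
            congr 1
            ring
        _ ≤ Mg * ((2 * max K2' 0 * (1 + M ^ 2) * (max K2' 0 + 2 * max K3' 0) + max K3' 0)
              * (y - x) ^ 2) :=
            mul_le_mul (hgM ξ hξI) hper (abs_nonneg _) hMg
  · intro x hx
    dsimp only
    have hres := rpow_integral_bound hx hε0 hε1.le
    have hb1 : |∫ ξ in (-1:ℝ)..1, g ξ * Real.log (1 + ((f x - f ξ) / (x - ξ)) ^ 2)| ≤ Mg * (2 * M) * 2 := by
      have hbb := norm_integral_le_of_norm_le_const_ae (a := (-1:ℝ)) (b := 1)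
          (C := Mg * (2 * M)) (f := fun ξ => g ξ * Real.log (1 + ((f x - f ξ) / (x - ξ)) ^ 2)) ?_
      · rw [Real.norm_eq_abs] at hbb
        refine le_trans hbb ?_
        rw [show |(1:ℝ) - (-1)| = 2 by norm_num]
      · filter_upwards [ae_ne_vol x] with ξ hnex hmem
        rw [uIoc_of_le (by norm_num : (-1:ℝ) ≤ 1)] at hmem
        have hξI : ξ ∈ Icc (-1:ℝ) 1 := Ioc_subset_Icc_self hmem
        rw [Real.norm_eq_abs, abs_mul]
        have hlog : |Real.log (1 + ((f x - f ξ) / (x - ξ)) ^ 2)| ≤ 2 * M := by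
          rw [abs_of_nonneg (Real.log_nonneg (by nlinarith [sq_nonneg ((f x - f ξ) / (x - ξ))]))]
          exact log_one_add_sq_le hM (hslope x hx ξ hξI hnex)
        exact mul_le_mul (hgM ξ hξI) hlog (abs_nonneg _) hMg
    have hb2 : |∫ ξ in (-1:ℝ)..1, g ξ * ((1 + ((f x - f ξ) / (x - ξ)) ^ 2)⁻¹ * (2 * ((f x - f ξ) / (x - ξ)) * ((f' x - ((f x - f ξ) / (x - ξ))) / (x - ξ))))| ≤ Mg * M * (4 / ε) := by
      have h := intervalIntegral.norm_integral_le_of_norm_le (μ := volume) (a := (-1:ℝ)) (b := 1)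
          (f := fun ξ => g ξ * ((1 + ((f x - f ξ) / (x - ξ)) ^ 2)⁻¹ * (2 * ((f x - f ξ) / (x - ξ)) * ((f' x - ((f x - f ξ) / (x - ξ))) / (x - ξ)))))
          (g := fun ξ => Mg * M * |x - ξ| ^ (ε - 1)) (by norm_num) ?_
          (hres.1.const_mul (Mg * M))
      · rw [Real.norm_eq_abs] at h
        refine le_trans h ?_
        rw [intervalIntegral.integral_const_mul]
        have hT0 : (0:ℝ) ≤ ∫ ξ in (-1:ℝ)..1, |x - ξ| ^ (ε - 1) := by
          apply integral_nonneg (by norm_num : (-1:ℝ) ≤ 1)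
          intro u hu
          exact Real.rpow_nonneg (abs_nonneg _) _
        exact mul_le_mul_of_nonneg_left hres.2 (by positivity)
      · rw [← ae_restrict_iff' measurableSet_Ioc]
        filter_upwards [ae_restrict_mem measurableSet_Ioc, ae_ne_res x] with ξ h1 h2
        have hξI : ξ ∈ Icc (-1:ℝ) 1 := Ioc_subset_Icc_self h1
        rw [Real.norm_eq_abs, abs_mul]
        calc |g ξ| * |((1 + ((f x - f ξ) / (x - ξ)) ^ 2)⁻¹ * (2 * ((f x - f ξ) / (x - ξ)) * ((f' x - ((f x - f ξ) / (x - ξ))) / (x - ξ))))|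
            ≤ Mg * (M * |x - ξ| ^ (ε - 1)) :=
              mul_le_mul (hgM ξ hξI) (hDbd x hx ξ hξI h2) (abs_nonneg _) hMg
          _ = Mg * M * |x - ξ| ^ (ε - 1) := by ring
    have hinv : ε * ε⁻¹ = 1 := mul_inv_cancel₀ (ne_of_gt hε0)
    have h1e : 1 ≤ ε⁻¹ := by nlinarith [inv_nonneg.2 hε0.le]
    have hdiv : 4 / ε = 4 * ε⁻¹ := by rw [div_eq_mul_inv]
    have hMMg : 0 ≤ M * Mg := mul_nonneg hM hMg
    calc |∫ ξ in (-1:ℝ)..1, g ξ * Real.log (1 + ((f x - f ξ) / (x - ξ)) ^ 2)|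
          + |∫ ξ in (-1:ℝ)..1, g ξ * ((1 + ((f x - f ξ) / (x - ξ)) ^ 2)⁻¹ * (2 * ((f x - f ξ) / (x - ξ)) * ((f' x - ((f x - f ξ) / (x - ξ))) / (x - ξ))))|
        ≤ Mg * (2 * M) * 2 + Mg * M * (4 / ε) := add_le_add hb1 hb2
      _ ≤ 8 * ε⁻¹ * M * Mg := by
          rw [hdiv]
          nlinarith [mul_nonneg hMMg (by linarith : (0:ℝ) ≤ ε⁻¹ - 1)]
end core
end Stmt18Aux
end
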